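/- Let F be non-anticipating and (α,β)-Hölder with constants c_{α,β}, c̃_{α,β}. Fix t₀ ≤ t₁ in [0,T] and θ ∈ (0,1). If Y, Z ∈ C^α([0,t₁],U) satisfy ‖Y‖_{α;[t₀,t₁]}, ‖Z‖_{α;[t₀,t₁]} ≤ R, then ‖F(·,Y) − F(·,Z)‖_{αβθ;[t₀,t₁]} ≤ 2 c̃_{α,β}^{1−θ} c_{α,β}^θ (1+R^β)^θ (‖Y−Z‖_{α;[0,t₁]} + |Y₀−Z₀|)^{β(1−θ)}. -/
import Mathlib


/-- `f` is α-Hölder on `[a,b]` with constant `C`. -/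
def HolderOnI {U : Type*} [NormedAddCommGroup U] (C α : ℝ) (f : ℝ → U) (a b : ℝ) : Prop :=
  ∀ s ∈ Set.Icc a b, ∀ t ∈ Set.Icc a b, ‖f t - f s‖ ≤ C * |t - s| ^ α

/-- The vector field `F : [0,T] × C^α([0,T],U) → L(V,U)` is `(α,β)`-Hölder with
constants `c` and `ctil`:
`‖F t Y - F s Y‖ ≤ c (1 + ‖Y‖_{α;[s,t]}^β) |t-s|^(αβ)` and
`‖F s Y - F s Z‖ ≤ ctil (‖Y-Z‖_{α;[0,s]} + ‖Y 0 - Z 0‖)^β`,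
expressed through arbitrary upper bounds for the Hölder seminorms. -/
def HolderVF {U V : Type*} [NormedAddCommGroup U] [NormedSpace ℝ U]
    [NormedAddCommGroup V] [NormedSpace ℝ V]
    (T α β c ctil : ℝ) (F : ℝ → (ℝ → U) → (V →L[ℝ] U)) : Prop :=
  (∀ s t : ℝ, 0 ≤ s → s ≤ t → t ≤ T → ∀ (Y : ℝ → U) (C₀ CY : ℝ), 0 ≤ C₀ → 0 ≤ CY →
    HolderOnI C₀ α Y 0 t → HolderOnI CY α Y s t →
    ‖F t Y - F s Y‖ ≤ c * (1 + CY ^ β) * (t - s) ^ (α * β)) ∧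
  (∀ s : ℝ, 0 ≤ s → s ≤ T → ∀ (Y Z : ℝ → U) (CY CZ D : ℝ), 0 ≤ CY → 0 ≤ CZ → 0 ≤ D →
    HolderOnI CY α Y 0 s → HolderOnI CZ α Z 0 s → HolderOnI D α (Y - Z) 0 s →
    ‖F s Y - F s Z‖ ≤ ctil * (D + ‖Y 0 - Z 0‖) ^ β)

/-- Restriction of a Hölder bound to a subinterval. -/
lemma HolderOnI.mono {U : Type*} [NormedAddCommGroup U] {C α : ℝ} {f : ℝ → U}
    {a b a' b' : ℝ} (h : HolderOnI C α f a b) (hsub : Set.Icc a' b' ⊆ Set.Icc a b) :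
    HolderOnI C α f a' b' :=
  fun s hs t ht => h s (hsub hs) t (hsub ht)

/-- Geometric interpolation: if `0 ≤ x ≤ a` and `x ≤ b` then `x ≤ a^(1-θ) b^θ`. -/
lemma interp_le {x a b θ : ℝ} (hx : 0 ≤ x) (ha : 0 ≤ a) (hb : 0 ≤ b)
    (hxa : x ≤ a) (hxb : x ≤ b) (hθ : 0 ≤ θ) (hθ1 : θ ≤ 1) :
    x ≤ a ^ (1 - θ) * b ^ θ := by
  rcases eq_or_lt_of_le hx with h0 | h0
  · rw [← h0]
    positivity
  · have hx' : x = x ^ (1 - θ) * x ^ θ := by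
      rw [← Real.rpow_add h0]; norm_num
    rw [hx']
    exact mul_le_mul (Real.rpow_le_rpow hx hxa (by linarith))
      (Real.rpow_le_rpow hx hxb hθ) (Real.rpow_nonneg hx θ) (Real.rpow_nonneg ha _)

/-- If `F` is non-anticipating and `(α,β)`-Hölder, `θ ∈ (0,1)`, and `Y, Z ∈ C^α([0,t₁],U)`
have `‖Y‖_{α;[t₀,t₁]}, ‖Z‖_{α;[t₀,t₁]} ≤ R` and `‖Y-Z‖_{α;[0,t₁]} ≤ D`, then
`t ↦ F t Y - F t Z` is αβθ-Hölder on `[t₀,t₁]` with constant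
`2 ctil^(1-θ) c^θ (1+R^β)^θ (D + ‖Y 0 - Z 0‖)^(β(1-θ))`. -/
theorem composition_difference_holder_bound
    {U V : Type*} [NormedAddCommGroup U] [NormedSpace ℝ U]
    [NormedAddCommGroup V] [NormedSpace ℝ V]
    (T α β θ c ctil R D : ℝ) (hT : 0 < T) (hα : 0 < α) (hα1 : α ≤ 1)
    (hβ : 0 < β) (hβ1 : β ≤ 1) (hθ : 0 < θ) (hθ1 : θ < 1)
    (hc : 0 ≤ c) (hctil : 0 ≤ ctil) (hR : 0 ≤ R) (hD : 0 ≤ D)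
    (F : ℝ → (ℝ → U) → (V →L[ℝ] U))
    (hNA : ∀ t ∈ Set.Icc (0:ℝ) T, ∀ Y : ℝ → U, F t Y = F t (fun x => Y (min t x)))
    (hF : HolderVF T α β c ctil F)
    (t₀ t₁ : ℝ) (ht₀ : 0 ≤ t₀) (ht₀₁ : t₀ ≤ t₁) (ht₁ : t₁ ≤ T)
    (Y Z : ℝ → U) (CY CZ : ℝ) (hCY : 0 ≤ CY) (hCZ : 0 ≤ CZ)
    (hY : HolderOnI CY α Y 0 t₁) (hZ : HolderOnI CZ α Z 0 t₁)
    (hYR : HolderOnI R α Y t₀ t₁) (hZR : HolderOnI R α Z t₀ t₁)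
    (hYZ : HolderOnI D α (Y - Z) 0 t₁) :
    HolderOnI (2 * ctil ^ (1 - θ) * c ^ θ * (1 + R ^ β) ^ θ *
        (D + ‖Y 0 - Z 0‖) ^ (β * (1 - θ))) (α * β * θ)
      (fun t => F t Y - F t Z) t₀ t₁ := by
  set A : ℝ := D + ‖Y 0 - Z 0‖ with hA
  have hA0 : 0 ≤ A := by positivity
  have hRβ : (0:ℝ) ≤ 1 + R ^ β := by positivity
  -- key estimate for ordered pairs
  have key : ∀ s ∈ Set.Icc t₀ t₁, ∀ t ∈ Set.Icc t₀ t₁, s ≤ t →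
      ‖(F t Y - F t Z) - (F s Y - F s Z)‖ ≤
        2 * ctil ^ (1 - θ) * c ^ θ * (1 + R ^ β) ^ θ * A ^ (β * (1 - θ)) *
          |t - s| ^ (α * β * θ) := by
    intro s hs t ht hst
    have hs0 : 0 ≤ s := le_trans ht₀ hs.1
    have ht0 : 0 ≤ t := le_trans ht₀ ht.1
    have htT : t ≤ T := le_trans ht.2 ht₁
    have hsT : s ≤ T := le_trans hst htT
    have hts0 : (0:ℝ) ≤ t - s := sub_nonneg.2 hst
    -- restrictions
    have hsub0t : Set.Icc (0:ℝ) t ⊆ Set.Icc 0 t₁ := Set.Icc_subset_Icc le_rfl ht.2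
    have hsub0s : Set.Icc (0:ℝ) s ⊆ Set.Icc 0 t₁ := Set.Icc_subset_Icc le_rfl (le_trans hst ht.2)
    have hsubst : Set.Icc s t ⊆ Set.Icc t₀ t₁ := Set.Icc_subset_Icc hs.1 ht.2
    -- first bound: time regularity
    have hFY := hF.1 s t hs0 hst htT Y CY R hCY hR (hY.mono hsub0t) (hYR.mono hsubst)
    have hFZ := hF.1 s t hs0 hst htT Z CZ R hCZ hR (hZ.mono hsub0t) (hZR.mono hsubst)
    have h1 : ‖(F t Y - F t Z) - (F s Y - F s Z)‖ ≤
        2 * (c * (1 + R ^ β) * (t - s) ^ (α * β)) := by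
      have heq : (F t Y - F t Z) - (F s Y - F s Z) = (F t Y - F s Y) - (F t Z - F s Z) := by abel
      rw [heq]
      calc ‖(F t Y - F s Y) - (F t Z - F s Z)‖
          ≤ ‖F t Y - F s Y‖ + ‖F t Z - F s Z‖ := norm_sub_le _ _
        _ ≤ c * (1 + R ^ β) * (t - s) ^ (α * β) + c * (1 + R ^ β) * (t - s) ^ (α * β) :=
            add_le_add hFY hFZ
        _ = 2 * (c * (1 + R ^ β) * (t - s) ^ (α * β)) := by ring
    -- second bound: difference of inputs
    have hFt := hF.2 t ht0 htT Y Z CY CZ D hCY hCZ hD (hY.mono hsub0t) (hZ.mono hsub0t)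
      (hYZ.mono hsub0t)
    have hFs := hF.2 s hs0 hsT Y Z CY CZ D hCY hCZ hD (hY.mono hsub0s) (hZ.mono hsub0s)
      (hYZ.mono hsub0s)
    have h2 : ‖(F t Y - F t Z) - (F s Y - F s Z)‖ ≤ 2 * (ctil * A ^ β) := by
      calc ‖(F t Y - F t Z) - (F s Y - F s Z)‖
          ≤ ‖F t Y - F t Z‖ + ‖F s Y - F s Z‖ := norm_sub_le _ _
        _ ≤ ctil * A ^ β + ctil * A ^ β := add_le_add hFt hFs
        _ = 2 * (ctil * A ^ β) := by ring
    -- interpolation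
    have hAβ : (0:ℝ) ≤ A ^ β := Real.rpow_nonneg hA0 _
    have htsαβ : (0:ℝ) ≤ (t - s) ^ (α * β) := Real.rpow_nonneg hts0 _
    have ha0 : (0:ℝ) ≤ ctil * A ^ β := mul_nonneg hctil hAβ
    have hb0 : (0:ℝ) ≤ c * (1 + R ^ β) * (t - s) ^ (α * β) :=
      mul_nonneg (mul_nonneg hc hRβ) htsαβ
    have hinterp := interp_le (norm_nonneg _)
      (by positivity : (0:ℝ) ≤ 2 * (ctil * A ^ β))
      (by positivity : (0:ℝ) ≤ 2 * (c * (1 + R ^ β) * (t - s) ^ (α * β)))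
      h2 h1 hθ.le hθ1.le
    refine hinterp.trans (le_of_eq ?_)
    have h2θ : (2:ℝ) ^ (1 - θ) * 2 ^ θ = 2 := by
      rw [← Real.rpow_add (by norm_num : (0:ℝ) < 2)]; norm_num
    rw [abs_of_nonneg hts0,
      Real.mul_rpow (by norm_num : (0:ℝ) ≤ 2) ha0,
      Real.mul_rpow hctil hAβ,
      Real.mul_rpow (by norm_num : (0:ℝ) ≤ 2) hb0,
      Real.mul_rpow (mul_nonneg hc hRβ) htsαβ,
      Real.mul_rpow hc hRβ,
      ← Real.rpow_mul hA0, ← Real.rpow_mul hts0]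
    calc 2 ^ (1 - θ) * (ctil ^ (1 - θ) * A ^ (β * (1 - θ))) *
          (2 ^ θ * (c ^ θ * (1 + R ^ β) ^ θ * (t - s) ^ (α * β * θ)))
        = (2 ^ (1 - θ) * 2 ^ θ) * ctil ^ (1 - θ) * c ^ θ * (1 + R ^ β) ^ θ *
            A ^ (β * (1 - θ)) * (t - s) ^ (α * β * θ) := by ring
      _ = 2 * ctil ^ (1 - θ) * c ^ θ * (1 + R ^ β) ^ θ * A ^ (β * (1 - θ)) *
            (t - s) ^ (α * β * θ) := by rw [h2θ]
  -- symmetrization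
  intro s hs t ht
  rcases le_total s t with h | h
  · exact key s hs t ht h
  · calc ‖(F t Y - F t Z) - (F s Y - F s Z)‖
        = ‖(F s Y - F s Z) - (F t Y - F t Z)‖ := norm_sub_rev _ _
      _ ≤ 2 * ctil ^ (1 - θ) * c ^ θ * (1 + R ^ β) ^ θ * A ^ (β * (1 - θ)) *
            |s - t| ^ (α * β * θ) := key t ht s hs h
      _ = 2 * ctil ^ (1 - θ) * c ^ θ * (1 + R ^ β) ^ θ * A ^ (β * (1 - θ)) *
            |t - s| ^ (α * β * θ) := by rw [abs_sub_comm]
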